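/- arXiv:1105.6221 — 9 statements merged into one kernel-verified Lean document; each statement's English description precedes it below -/
import Mathlib

section
/- Let G be a topological group and H ⊆ G a subgroup. Then the pair (G,H) is relatively extremely amenable if and only if there exists a universal compact Hausdorff G-space T and a point t₀ ∈ T such that h·t₀ = t₀ for every h ∈ H. -/
/-- A topological group `G` is *extremely amenable* if every continuous action of `G`
on a nonempty compact Hausdorff space has a `G`-fixed point. -/
def ExtremelyAmenable (G : Type) [Group G] [TopologicalSpace G] : Prop :=
  ∀ (X : Type) [TopologicalSpace X] [CompactSpace X] [T2Space X] [Nonempty X]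
    [MulAction G X] [ContinuousSMul G X], ∃ x : X, ∀ g : G, g • x = x

/-- The pair `(G, H)` is *relatively extremely amenable* if every continuous action of `G`
on a nonempty compact Hausdorff space has a point fixed by every element of `H`. -/
def RelativelyExtremelyAmenable (G : Type) [Group G] [TopologicalSpace G] (H : Subgroup G) :
    Prop :=
  ∀ (X : Type) [TopologicalSpace X] [CompactSpace X] [T2Space X] [Nonempty X]
    [MulAction G X] [ContinuousSMul G X], ∃ x : X, ∀ h ∈ H, h • x = x
/-- A `G`-space `X` is *minimal* if `X` is nonempty and the only closed `G`-invariant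
subsets of `X` are `∅` and `X`. -/
def IsMinimalSpace (G : Type) (X : Type) [Group G] [TopologicalSpace X] [MulAction G X] :
    Prop :=
  Nonempty X ∧ ∀ S : Set X, IsClosed S → (∀ g : G, ∀ x ∈ S, g • x ∈ S) →
    S = ∅ ∨ S = Set.univ

/-- A `G`-space `X` is *universal* if every minimal compact Hausdorff `G`-space `Y` is a
continuous `G`-equivariant surjective image of `X`. -/
def IsUniversalSpace (G : Type) [Group G] [TopologicalSpace G] (X : Type)
    [TopologicalSpace X] [MulAction G X] : Prop :=
  ∀ (Y : Type) [TopologicalSpace Y] [CompactSpace Y] [T2Space Y] [MulAction G Y]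
    [ContinuousSMul G Y], IsMinimalSpace G Y →
      ∃ f : X → Y, Continuous f ∧ Function.Surjective f ∧
        ∀ (g : G) (x : X), f (g • x) = g • f x

/-- A compact Hausdorff space with a continuous `G`-action (a compact `G`-space). -/
structure CompactGSpace (G : Type) [Group G] [TopologicalSpace G] : Type 1 where
  carrier : Type
  [ts : TopologicalSpace carrier]
  [cs : CompactSpace carrier]
  [t2 : T2Space carrier]
  [ma : MulAction G carrier]
  [csmul : ContinuousSMul G carrier]

attribute [instance] CompactGSpace.ts CompactGSpace.cs CompactGSpace.t2
  CompactGSpace.ma CompactGSpace.csmul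

/-!
A minimal compact `G`-space `Y` with a point `y₀` embeds into `Filter G` via
`y ↦ comap (· • y₀) (𝓝 y)`, because every orbit is dense and `Y` is Hausdorff. So every minimal
`G`-space is isomorphic to one carried by a subset of `Filter G`, and the product of all compact
`G`-spaces carried by such subsets is universal; relative extreme amenability gives it an
`H`-fixed point. Conversely, by Zorn's lemma every nonempty compact `G`-space `X` contains a
minimal closed invariant subset `M`, and an equivariant map `T → M` sends `t₀` to an `H`-fixed
point of `X`.
-/

open Filter Topology Function Set

theorem DenseRange.injective_comap_nhds {α X : Type*} [TopologicalSpace X] [T2Space X]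
    {f : α → X} (hf : DenseRange f) : Injective fun x : X => comap f (𝓝 x) := by
  intro x y hxy
  have htrace : 𝓝 x ⊓ 𝓟 (range f) = 𝓝 y ⊓ 𝓟 (range f) := by
    rw [← map_comap, ← map_comap]
    exact congrArg (map f) hxy
  have hne : NeBot (𝓝 x ⊓ 𝓟 (range f)) := hf.nhdsWithin_neBot x
  refine eq_of_nhds_neBot (hne.mono (le_inf inf_le_left ?_))
  exact htrace ▸ inf_le_left

section Minimal

variable {G X : Type} [Group G] [TopologicalSpace X] [MulAction G X]

theorem IsMinimalSpace.isMinimal [ContinuousConstSMul G X] (h : IsMinimalSpace G X) :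
    MulAction.IsMinimal G X :=
  (isMinimal_iff_isClosed_smul_invariant G).2 fun s hs hinv =>
    h.2 s hs fun g _ hx => hinv g (smul_mem_smul_set hx)

theorem IsMinimalSpace.exists_injective_filter [T2Space X] [ContinuousConstSMul G X]
    (h : IsMinimalSpace G X) : ∃ j : X → Filter G, Injective j := by
  obtain ⟨x₀⟩ := h.1
  have := h.isMinimal
  exact ⟨_, (denseRange_smul G x₀).injective_comap_nhds⟩

end Minimal

instance SubMulAction.continuousSMul {G X : Type*} [Monoid G] [TopologicalSpace G]
    [TopologicalSpace X] [MulAction G X] [ContinuousSMul G X] (p : SubMulAction G X) :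
    ContinuousSMul G p :=
  ⟨(continuous_fst.smul (continuous_subtype_val.comp continuous_snd)).subtype_mk _⟩

section Subflow

variable (G : Type) {X : Type} [Group G] [TopologicalSpace X] [MulAction G X]

def IsSubflow (S : Set X) : Prop :=
  S.Nonempty ∧ IsClosed S ∧ ∀ g : G, ∀ x ∈ S, g • x ∈ S

variable {G}

theorem isSubflow_univ [Nonempty X] : IsSubflow G (univ : Set X) :=
  ⟨univ_nonempty, isClosed_univ, fun _ _ _ => mem_univ _⟩

theorem IsChain.isSubflow_sInter [CompactSpace X] {c : Set (Set X)}
    (hchain : IsChain (· ⊆ ·) c) (hc : ∀ S ∈ c, IsSubflow G S) (hne : c.Nonempty) :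
    IsSubflow G (⋂₀ c) := by
  have : Nonempty c := hne.to_subtype
  have hdir : DirectedOn (· ⊇ ·) c := fun a ha b hb =>
    (hchain.total ha hb).elim (fun h => ⟨a, ha, subset_rfl, h⟩) (fun h => ⟨b, hb, h, subset_rfl⟩)
  refine ⟨?_, isClosed_sInter fun S hS => (hc S hS).2.1,
    fun g x hx S hS => (hc S hS).2.2 g x (hx S hS)⟩
  exact IsCompact.nonempty_sInter_of_directed_nonempty_isCompact_isClosed hdir
    (fun S hS => (hc S hS).1) (fun S hS => (hc S hS).2.1.isCompact) (fun S hS => (hc S hS).2.1)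

variable (G)

theorem exists_minimal_isSubflow [CompactSpace X] [Nonempty X] :
    ∃ m : Set X, Minimal (IsSubflow G) m := by
  obtain ⟨m, -, hm⟩ := zorn_superset_nonempty {S : Set X | IsSubflow G S}
    (fun _c hc hchain hne => ⟨_, hchain.isSubflow_sInter hc hne, fun _ => sInter_subset_of_mem⟩)
    univ isSubflow_univ
  exact ⟨m, hm⟩

theorem exists_isClosed_subMulAction_isMinimalSpace [CompactSpace X] [Nonempty X] :
    ∃ p : SubMulAction G X, IsClosed (p : Set X) ∧ IsMinimalSpace G p := by
  obtain ⟨m, hm⟩ := exists_minimal_isSubflow G (X := X)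
  obtain ⟨hm_ne, hm_closed, hm_inv⟩ := hm.prop
  refine ⟨⟨m, fun g x hx => hm_inv g x hx⟩, hm_closed, hm_ne.to_subtype, fun S hS hinv => ?_⟩
  refine S.eq_empty_or_nonempty.imp_right fun hS_ne => eq_univ_of_forall fun x => ?_
  have himage : Subtype.val '' S = m := by
    refine hm.eq_of_subset ⟨hS_ne.image _, ?_, ?_⟩ (Subtype.coe_image_subset _ _)
    · exact hm_closed.isClosedEmbedding_subtypeVal.isClosedMap _ hS
    · rintro g _ ⟨y, hy, rfl⟩
      exact ⟨g • y, hinv g y hy, rfl⟩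
  obtain ⟨y, hy, hyx⟩ : (x : X) ∈ Subtype.val '' S := by rw [himage]; exact x.2
  exact Subtype.val_injective hyx ▸ hy

end Subflow

section UniversalFlow

variable {G : Type} [Group G] [TopologicalSpace G]

/-- Unlike `CompactGSpace G`, compact `G`-spaces carried by subsets of a fixed `κ` form a
`Type`, so their product is again a compact `G`-space. -/
structure CompactGSpaceIn (G : Type) [Group G] [TopologicalSpace G] (κ : Type) : Type where
  carrier : Set κ
  [ts : TopologicalSpace carrier]
  [cs : CompactSpace carrier]
  [t2 : T2Space carrier]
  [ma : MulAction G carrier]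
  [csmul : ContinuousSMul G carrier]
  [ne : Nonempty carrier]

attribute [instance] CompactGSpaceIn.ts CompactGSpaceIn.cs CompactGSpaceIn.t2
  CompactGSpaceIn.ma CompactGSpaceIn.csmul CompactGSpaceIn.ne

variable {κ Y : Type} [TopologicalSpace Y] [CompactSpace Y] [T2Space Y] [Nonempty Y]
  [MulAction G Y] [ContinuousSMul G Y]

theorem CompactGSpaceIn.exists_equivariant_homeomorph {j : Y → κ} (hj : Injective j) :
    ∃ (i : CompactGSpaceIn G κ) (φ : i.carrier ≃ₜ Y), ∀ (g : G) x, φ (g • x) = g • φ x := by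
  let e : range j ≃ Y := (Equiv.ofInjective j hj).symm
  let _ : TopologicalSpace (range j) := .induced e ‹_›
  let _ : MulAction G (range j) := e.mulAction G
  let φ : range j ≃ₜ Y := e.toHomeomorphOfIsInducing ⟨rfl⟩
  have hφ : ∀ (g : G) x, φ (g • x) = g • φ x := fun g x => e.apply_symm_apply _
  have : CompactSpace (range j) := φ.symm.compactSpace
  have : T2Space (range j) := φ.isEmbedding.t2Space
  have : ContinuousSMul G (range j) := ⟨φ.symm.continuous.comp
    (continuous_fst.smul (φ.continuous.comp continuous_snd))⟩
  have : Nonempty (range j) := (Equiv.ofInjective j hj).symm.nonempty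
  exact ⟨⟨range j⟩, φ, hφ⟩

theorem exists_equivariant_surjection_pi_compactGSpaceIn {j : Y → κ} (hj : Injective j) :
    ∃ f : (∀ i : CompactGSpaceIn G κ, i.carrier) → Y,
      Continuous f ∧ Surjective f ∧ ∀ (g : G) t, f (g • t) = g • f t := by
  classical
  obtain ⟨i, φ, hφ⟩ := CompactGSpaceIn.exists_equivariant_homeomorph (G := G) hj
  refine ⟨fun t => φ (t i), φ.continuous.comp (continuous_apply i), fun y => ?_,
    fun g t => hφ g (t i)⟩
  exact ⟨update (fun _ => Classical.arbitrary _) i (φ.symm y), by simp⟩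

variable (G) in
abbrev universalFlow : CompactGSpace G :=
  ⟨∀ i : CompactGSpaceIn G (Filter G), i.carrier⟩

theorem isUniversalSpace_universalFlow : IsUniversalSpace G (universalFlow G).carrier := by
  intro Y _ _ _ _ _ hmin
  have := hmin.1
  obtain ⟨j, hj⟩ := hmin.exists_injective_filter
  exact exists_equivariant_surjection_pi_compactGSpaceIn hj

end UniversalFlow

theorem RelativelyExtremelyAmenable.of_isUniversalSpace {G T : Type} [Group G]
    [TopologicalSpace G] [TopologicalSpace T] [MulAction G T] {H : Subgroup G}
    (hT : IsUniversalSpace G T) {t₀ : T} (ht₀ : ∀ h ∈ H, h • t₀ = t₀) :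
    RelativelyExtremelyAmenable G H := by
  intro X _ _ _ _ _ _
  obtain ⟨p, hp_closed, hp_min⟩ := exists_isClosed_subMulAction_isMinimalSpace G (X := X)
  have : CompactSpace p := isCompact_iff_compactSpace.mp hp_closed.isCompact
  obtain ⟨f, -, -, hf⟩ := hT p hp_min
  exact ⟨f t₀, fun h hh => congrArg Subtype.val ((hf h t₀).symm.trans (congrArg f (ht₀ h hh)))⟩

theorem relativelyExtremelyAmenable_iff_exists_universal_fixed_point_general
    (G : Type) [Group G] [TopologicalSpace G] (H : Subgroup G) :
    RelativelyExtremelyAmenable G H ↔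
      ∃ (T : CompactGSpace G) (t₀ : T.carrier),
        IsUniversalSpace G T.carrier ∧ ∀ h ∈ H, h • t₀ = t₀ := by
  constructor
  · intro hH
    obtain ⟨t₀, ht₀⟩ := hH (universalFlow G).carrier
    exact ⟨universalFlow G, t₀, isUniversalSpace_universalFlow, ht₀⟩
  · rintro ⟨T, t₀, hT, ht₀⟩
    exact .of_isUniversalSpace hT ht₀

/-- The pair `(G, H)` is relatively extremely amenable if and only if there is a universal
compact Hausdorff `G`-space `T` with a point `t₀` fixed by every element of `H`. -/
theorem relativelyExtremelyAmenable_iff_exists_universal_fixed_point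
    (G : Type) [Group G] [TopologicalSpace G] [IsTopologicalGroup G] (H : Subgroup G) :
    RelativelyExtremelyAmenable G H ↔
      ∃ (T : CompactGSpace G) (t₀ : T.carrier),
        IsUniversalSpace G T.carrier ∧ ∀ h ∈ H, h • t₀ = t₀ :=
  relativelyExtremelyAmenable_iff_exists_universal_fixed_point_general G H
end

section
/- Let G be a locally compact Hausdorff topological group that is not compact, and let H ⊆ G be a subgroup with H ≠ {e}. Then the pair (G,H) is not relatively extremely amenable; that is, there exists a continuous action of G on a nonempty compact Hausdorff space X such that no point of X is fixed by every element of H. -/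
/-!
Veech's argument: fix `h ∈ H` with `h ≠ 1`. Take a bump function `ψ` equal to `1` on a symmetric
neighbourhood `V` of `1` and whose support `S` satisfies `h ∉ S * S⁻¹`, a maximal `V`-separated
set `M` (so that the translates `V * t`, `t ∈ M`, cover `G`), and a colouring `c` of `M` by
finitely many colours such that `t * t'⁻¹ ∈ S⁻¹ * {h} * S` forces `c t ≠ c t'`; finitely many
colours suffice because a compact set contains boundedly many `V`-separated points. Then
`F x j = ⨆ (t of colour j), ψ (x * t⁻¹)` is right uniformly continuous with values in `[0,1]ⁿ`,
and `dist (F x) (F (h * x)) ≥ 1` for every `x`: if `x * t₀⁻¹ ∈ V` and `j = c t₀`, then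
`F x j = 1` and `F (h * x) j = 0`. The closure of the right translates of `F` in `G → ℝⁿ` is a
compact `G`-flow on which the closed condition `dist (φ 1) (φ h) ≥ 1` persists, so `h` fixes
none of its points.
-/

open Set Filter Topology Pointwise

namespace SimpleGraph

variable {V : Type*} (G : SimpleGraph V)

theorem colorable_succ_of_forall_finset_card_le {N : ℕ}
    (hdeg : ∀ v (s : Finset V), ↑s ⊆ G.neighborSet v → s.card ≤ N) : G.Colorable (N + 1) := by
  classical
  have hfin (v : V) : (G.neighborSet v).Finite := Set.not_infinite.1 fun hinf => by
    obtain ⟨s, hs, hcard⟩ := hinf.exists_subset_card_eq (N + 1)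
    have := hdeg v s hs
    omega
  have hfree (v : V) (col : V → Fin (N + 1)) : ∃ i, i ∉ (hfin v).toFinset.image col := by
    have hlt : ((hfin v).toFinset.image col).card < (Finset.univ : Finset (Fin (N + 1))).card :=
      calc _ ≤ (hfin v).toFinset.card := Finset.card_image_le
        _ ≤ N := hdeg v _ (by simp)
        _ < _ := by simp
    obtain ⟨i, -, hi⟩ := Finset.exists_mem_notMem_of_card_lt_card hlt
    exact ⟨i, hi⟩
  -- greedy colouring along a well-order: each vertex avoids the colours of its predecessors
  let col : V → Fin (N + 1) := IsWellFounded.wf.fix (r := WellOrderingRel) fun v prev =>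
    (hfree v fun u => if h : WellOrderingRel u v then prev u h else 0).choose
  have hcol (u v : V) (huv : WellOrderingRel u v) (hadj : G.Adj u v) : col u ≠ col v := by
    have hv : col v = (hfree v fun w => if WellOrderingRel w v then col w else 0).choose :=
      IsWellFounded.wf.fix_eq _ v
    intro heq
    apply (hfree v _).choose_spec
    rw [← hv]
    exact Finset.mem_image.2 ⟨u, by simpa using hadj.symm, by simp [huv, heq]⟩
  refine ⟨Coloring.mk col fun {u v} hadj => ?_⟩
  rcases trichotomous_of WellOrderingRel u v with h | rfl | h
  · exact hcol u v h hadj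
  · exact absurd hadj G.irrefl
  · exact (hcol v u h hadj.symm).symm

end SimpleGraph

theorem Equicontinuous.continuous_uncurry {ι X α : Type*} [TopologicalSpace ι] [TopologicalSpace X]
    [UniformSpace α] {F : ι → X → α} (hF : Equicontinuous F)
    (hcont : ∀ x, Continuous fun i => F i x) : Continuous (Function.uncurry F) := by
  refine continuous_iff_continuousAt.2 fun ⟨i₀, x₀⟩ => ?_
  rw [ContinuousAt, Uniform.tendsto_nhds_right]
  intro U hU
  obtain ⟨W, hW, hWU⟩ := comp_mem_uniformity_sets hU
  rw [mem_map]
  have hi : ∀ᶠ i in 𝓝 i₀, (F i₀ x₀, F i x₀) ∈ W :=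
    Uniform.tendsto_nhds_right.1 ((hcont x₀).tendsto i₀) hW
  filter_upwards [hi.prod_nhds (hF x₀ W hW)] with ⟨i, x⟩ ⟨h₁, h₂⟩
  exact hWU ⟨F i x₀, h₁, h₂ i⟩

theorem UniformEquicontinuous.uniformContinuous_ciSup {ι β : Type*} [UniformSpace β]
    {F : ι → β → ℝ} (hF : UniformEquicontinuous F) (hbdd : ∀ x, BddAbove (range fun i => F i x)) :
    UniformContinuous fun x => ⨆ i, F i x := by
  cases isEmpty_or_nonempty ι
  · simpa [Real.iSup_of_isEmpty] using uniformContinuous_const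
  refine Metric.uniformity_basis_dist_le.tendsto_right_iff.2 fun ε hε => ?_
  filter_upwards [Metric.uniformEquicontinuous_iff_right.1 hF ε hε] with ⟨x, y⟩ hxy
  have hle (x y : β) (hxy : ∀ i, dist (F i x) (F i y) < ε) : ⨆ i, F i x ≤ ε + ⨆ i, F i y :=
    ciSup_le fun i => by
      have := le_ciSup (hbdd y) i
      linarith [(abs_sub_lt_iff.1 (Real.dist_eq _ _ ▸ hxy i)).1]
  rw [Real.dist_eq, abs_sub_le_iff, sub_le_iff_le_add, sub_le_iff_le_add]
  exact ⟨hle x y hxy, hle y x fun i => dist_comm (F i x) (F i y) ▸ hxy i⟩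

section Group

variable {G : Type*} [Group G]

theorem exists_pairwise_mul_inv_notMem_forall_exists_mul_inv_mem {V : Set G} (hV1 : (1 : G) ∈ V)
    (hV : V⁻¹ = V) :
    ∃ M : Set G, M.Pairwise (fun a b => a * b⁻¹ ∉ V) ∧ ∀ x, ∃ t ∈ M, x * t⁻¹ ∈ V := by
  obtain ⟨M, hM⟩ := zorn_subset {M : Set G | M.Pairwise fun a b => a * b⁻¹ ∉ V}
    fun c hc hch => ⟨⋃₀ c, hch.pairwise_sUnion.2 hc, fun _ => subset_sUnion_of_mem⟩
  refine ⟨M, hM.prop, fun x => by_contra fun hx => ?_⟩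
  push Not at hx
  have hins : (insert x M).Pairwise fun a b => a * b⁻¹ ∉ V :=
    hM.prop.insert fun b hb _ => ⟨hx b hb, fun hbx => hx b hb (by
      rw [← hV]; simpa using hbx)⟩
  exact hx x (hM.2 hins (subset_insert x M) (mem_insert x M)) (by simpa using hV1)

variable {Y : Type*} [TopologicalSpace Y] {F : G → Y}

def rightOrbitClosure (F : G → Y) : Set (G → Y) :=
  closure (range fun a x => F (x * a))

theorem comp_mul_right_mem_rightOrbitClosure {φ : G → Y} (hφ : φ ∈ rightOrbitClosure F) (g : G) :
    (fun x => φ (x * g)) ∈ rightOrbitClosure F :=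
  map_mem_closure (continuous_pi fun x => continuous_apply (x * g)) hφ <| by
    rintro _ ⟨a, rfl⟩
    exact ⟨g * a, by simp [mul_assoc]⟩

instance : Nonempty (rightOrbitClosure F) :=
  ⟨⟨F, subset_closure ⟨1, by simp⟩⟩⟩

instance : MulAction G (rightOrbitClosure F) where
  smul g φ := ⟨fun x => φ.1 (x * g), comp_mul_right_mem_rightOrbitClosure φ.2 g⟩
  one_smul φ := Subtype.ext <| funext fun x => congrArg φ.1 (mul_one x)
  mul_smul g₁ g₂ φ := Subtype.ext <| funext fun x => congrArg φ.1 (mul_assoc x g₁ g₂).symm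

theorem isCompact_rightOrbitClosure [T2Space Y] {K : Set Y} (hK : IsCompact K)
    (hF : ∀ x, F x ∈ K) : IsCompact (rightOrbitClosure F) :=
  (isCompact_univ_pi fun _ => hK).of_isClosed_subset isClosed_closure <|
    closure_minimal (by rintro _ ⟨a, rfl⟩ x -; exact hF _)
      (isClosed_set_pi fun _ _ => hK.isClosed)

theorem apply_mem_of_mem_rightOrbitClosure {S : Set (Y × Y)} (hS : IsClosed S) {g : G}
    (hF : ∀ x, (F x, F (g * x)) ∈ S) {φ : G → Y} (hφ : φ ∈ rightOrbitClosure F) (x : G) :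
    (φ x, φ (g * x)) ∈ S :=
  show φ ∈ {φ : G → Y | (φ x, φ (g * x)) ∈ S} from closure_minimal
    (by rintro _ ⟨a, rfl⟩; simpa [mul_assoc] using hF (x * a))
    (hS.preimage (by fun_prop)) hφ

end Group

section TopologicalGroup

variable {G : Type*} [Group G] [TopologicalSpace G] [IsTopologicalGroup G]

theorem IsCompact.exists_card_le_of_pairwise_mul_inv_notMem {K V : Set G} (hK : IsCompact K)
    (hV : V ∈ 𝓝 1) : ∃ N : ℕ, ∀ s : Finset G, ↑s ⊆ K →
      (s : Set G).Pairwise (fun a b => a * b⁻¹ ∉ V) → s.card ≤ N := by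
  classical
  obtain ⟨U, hU, hUV⟩ := exists_nhds_split_inv hV
  obtain ⟨t, -, hKt⟩ := hK.elim_nhds_subcover (fun x => (· * x⁻¹) ⁻¹' U) fun x _ =>
    (continuous_mul_const x⁻¹).continuousAt.preimage_mem_nhds (by simpa using hU)
  refine ⟨t.card, fun s hsK hs => ?_⟩
  have hpiece (x : G) : (s.filter fun y => y * x⁻¹ ∈ U).card ≤ 1 := by
    refine Finset.card_le_one.2 fun a ha b hb => by_contra fun hab => ?_
    simp only [Finset.mem_filter] at ha hb
    exact hs ha.1 hb.1 hab (by simpa [div_eq_mul_inv, mul_assoc] using hUV _ ha.2 _ hb.2)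
  calc s.card ≤ (t.biUnion fun x => s.filter fun y => y * x⁻¹ ∈ U).card :=
        Finset.card_le_card fun y hy => by
          obtain ⟨x, hx, hyx⟩ := mem_iUnion₂.1 (hKt (hsK hy))
          exact Finset.mem_biUnion.2 ⟨x, hx, Finset.mem_filter.2 ⟨hy, hyx⟩⟩
    _ ≤ ∑ x ∈ t, (s.filter fun y => y * x⁻¹ ∈ U).card := Finset.card_biUnion_le
    _ ≤ ∑ _x ∈ t, 1 := Finset.sum_le_sum fun x _ => hpiece x
    _ = t.card := by simp

theorem exists_colorable_fromRel_mul_inv_mem {V K M : Set G} (hV : V ∈ 𝓝 1) (hK : IsCompact K)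
    (hM : M.Pairwise fun a b => a * b⁻¹ ∉ V) :
    ∃ N, (SimpleGraph.fromRel fun s t : M => (s : G) * (t : G)⁻¹ ∈ K).Colorable N := by
  classical
  obtain ⟨N, hN⟩ := (hK.union hK.inv).exists_card_le_of_pairwise_mul_inv_notMem hV
  refine ⟨N + 1, SimpleGraph.colorable_succ_of_forall_finset_card_le _ fun t s hs => ?_⟩
  have hinj : Function.Injective fun u : M => (u : G) * (t : G)⁻¹ :=
    fun u w h => Subtype.ext (mul_right_cancel h)
  rw [← Finset.card_image_of_injective s hinj]
  refine hN _ (fun _ hu => ?_) fun _ hu _ hw hne => ?_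
  · obtain ⟨u, hus, rfl⟩ := Finset.mem_image.1 hu
    obtain ⟨-, h | h⟩ : t ≠ u ∧ ((t : G) * (u : G)⁻¹ ∈ K ∨ (u : G) * (t : G)⁻¹ ∈ K) := hs hus
    · exact Or.inr (by simpa using h)
    · exact Or.inl h
  · obtain ⟨u, hus, rfl⟩ := Finset.mem_image.1 hu
    obtain ⟨w, hws, rfl⟩ := Finset.mem_image.1 hw
    have huw : (u : G) ≠ w := fun h => hne (by rw [h])
    simpa [mul_assoc] using hM u.2 w.2 huw

-- `x` and `y` are close when `y * x⁻¹` is close to `1`, so `UniformContinuous F` says that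
-- `F (u * x)` is close to `F x` uniformly in `x` for `u` near `1`.
attribute [local instance] IsTopologicalGroup.rightUniformSpace

theorem UniformContinuous.uniformEquicontinuous_comp_mul_right {Y : Type*} [UniformSpace Y]
    {F : G → Y} (hF : UniformContinuous F) : UniformEquicontinuous fun a x => F (x * a) := by
  intro U hU
  obtain ⟨N, hN, hNU⟩ := mem_comap.1 (hF hU)
  filter_upwards [preimage_mem_comap hN] with p hp a
  exact @hNU (p.1 * a, p.2 * a) (by simpa [mul_assoc] using hp)

theorem continuousSMul_rightOrbitClosure {Y : Type*} [UniformSpace Y] {F : G → Y}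
    (hF : UniformContinuous F) : ContinuousSMul G (rightOrbitClosure F) := by
  have heq : Equicontinuous ((↑) : rightOrbitClosure F → G → Y) :=
    Set.Equicontinuous.closure
      (equicontinuous_iff_range.1 hF.uniformEquicontinuous_comp_mul_right.equicontinuous)
  have hev : Continuous fun p : rightOrbitClosure F × G => (p.1 : G → Y) p.2 :=
    heq.continuous_uncurry fun x => (continuous_apply x).comp continuous_subtype_val
  exact ⟨Continuous.subtype_mk (continuous_pi fun x =>
    hev.comp (continuous_snd.prodMk (continuous_const.mul continuous_fst))) _⟩

theorem exists_continuousMap_eqOn_one_notMem_tsupport_mul_inv [T1Space G] [LocallyCompactSpace G]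
    {h : G} (hh : h ≠ 1) : ∃ V ∈ 𝓝 (1 : G), V⁻¹ = V ∧ ∃ ψ : C(G, ℝ), EqOn ψ 1 V ∧
      HasCompactSupport ψ ∧ (∀ x, ψ x ∈ Icc (0 : ℝ) 1) ∧ h ∉ tsupport ψ * (tsupport ψ)⁻¹ := by
  obtain ⟨U, hU, hUh⟩ := exists_nhds_split_inv (compl_singleton_mem_nhds hh.symm)
  obtain ⟨L, hLc, hL⟩ := exists_compact_mem_nhds (1 : G)
  obtain ⟨V, hV, hVcl, hVinv, hVV⟩ :=
    exists_closed_nhds_one_inv_eq_mul_subset (inter_mem (interior_mem_nhds.2 hU) hL)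
  have hVsub : V ⊆ interior U ∩ L := (subset_mul_left V (mem_of_mem_nhds hV)).trans hVV
  obtain ⟨ψ, hψV, hψc, hψU, hψI⟩ := exists_continuousMap_one_of_isCompact_subset_isOpen
    (hLc.of_isClosed_subset hVcl (hVsub.trans inter_subset_right)) isOpen_interior
    (hVsub.trans inter_subset_left)
  refine ⟨V, hV, hVinv, ψ, hψV, hψc, hψI, ?_⟩
  rintro ⟨a, ha, b, hb, hab⟩
  exact hUh a (interior_subset (hψU ha)) b⁻¹ (interior_subset (hψU (by simpa using hb)))
    (by simpa [div_eq_mul_inv] using hab)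

theorem exists_uniformContinuous_one_le_dist_mul_left [T1Space G] [LocallyCompactSpace G]
    {h : G} (hh : h ≠ 1) : ∃ (n : ℕ) (F : G → Fin n → ℝ), UniformContinuous F ∧
      (∀ x j, F x j ∈ Icc (0 : ℝ) 1) ∧ ∀ x, 1 ≤ dist (F x) (F (h * x)) := by
  obtain ⟨V, hV, hVinv, ψ, hψV, hψc, hψI, hψh⟩ :=
    exists_continuousMap_eqOn_one_notMem_tsupport_mul_inv hh
  set S := tsupport ψ
  obtain ⟨M, hMsep, hMcov⟩ :=
    exists_pairwise_mul_inv_notMem_forall_exists_mul_inv_mem (mem_of_mem_nhds hV) hVinv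
  obtain ⟨n, ⟨c⟩⟩ := exists_colorable_fromRel_mul_inv_mem (K := S⁻¹ * {h} * S) hV
    ((hψc.inv.mul isCompact_singleton).mul hψc) hMsep
  let F : G → Fin n → ℝ := fun x j => ⨆ t : {t : M // c t = j}, ψ (x * (t : G)⁻¹)
  have hbdd (x : G) (j : Fin n) :
      BddAbove (range fun t : {t : M // c t = j} => ψ (x * (t : G)⁻¹)) :=
    ⟨1, by rintro _ ⟨t, rfl⟩; exact (hψI _).2⟩
  have hF1 (x : G) (j : Fin n) : F x j ≤ 1 := Real.iSup_le (fun _ => (hψI _).2) zero_le_one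
  have hF0 (x : G) (j : Fin n) : 0 ≤ F x j := Real.iSup_nonneg fun _ => (hψI _).1
  refine ⟨n, F, uniformContinuous_pi.2 fun j => ?_, fun x j => ⟨hF0 x j, hF1 x j⟩, fun x => ?_⟩
  · have hψu := hψc.uniformContinuous_of_continuous ψ.continuous
    have hequi := hψu.uniformEquicontinuous_comp_mul_right.comp fun t : {t : M // c t = j} =>
      (t : G)⁻¹
    exact hequi.uniformContinuous_ciSup (hbdd · j)
  obtain ⟨t₀, ht₀M, ht₀⟩ := hMcov x
  set j := c ⟨t₀, ht₀M⟩
  have hVS : V ⊆ S := fun y hy => subset_tsupport ψ (by simp [hψV hy])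
  -- otherwise either `t = t₀` and `h ∈ S * S⁻¹`, or `t` and `t₀` are adjacent but share colour `j`
  have hψzero (t : {t : M // c t = j}) : ψ (h * x * (t : G)⁻¹) = 0 := by
    by_contra hne
    have ht : h * x * (t : G)⁻¹ ∈ S := subset_tsupport ψ hne
    by_cases htt : (t : M) = ⟨t₀, ht₀M⟩
    · refine hψh ⟨_, ht, (x * t₀⁻¹)⁻¹, by simpa using hVS ht₀, ?_⟩
      rw [htt]; group
    · refine c.valid ((SimpleGraph.fromRel_adj _ _ _).2 ⟨htt, Or.inl ?_⟩) t.2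
      exact ⟨_, ⟨(h * x * (t : G)⁻¹)⁻¹, by simpa using ht, h, rfl, rfl⟩, x * t₀⁻¹, hVS ht₀,
        by group⟩
  have hFone : F x j = 1 :=
    le_antisymm (hF1 x j) ((hψV ht₀).symm.trans_le (le_ciSup (hbdd x j) ⟨⟨t₀, ht₀M⟩, rfl⟩))
  have hFzero : F (h * x) j = 0 :=
    le_antisymm (Real.iSup_le (fun t => (hψzero t).le) le_rfl) (hF0 _ j)
  calc (1 : ℝ) = dist (F x j) (F (h * x) j) := by simp [hFone, hFzero]
    _ ≤ dist (F x) (F (h * x)) := dist_le_pi_dist _ _ j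

end TopologicalGroup

theorem not_relativelyExtremelyAmenable_of_locallyCompact_noncompact_general
    (G : Type) [Group G] [TopologicalSpace G] [IsTopologicalGroup G] [T2Space G]
    [LocallyCompactSpace G]
    (H : Subgroup G) (hH : H ≠ ⊥) :
    ¬ RelativelyExtremelyAmenable G H := by
  intro hG
  obtain ⟨h, hhH, hh⟩ := H.bot_or_exists_ne_one.resolve_left hH
  obtain ⟨n, F, hFu, hFI, hFh⟩ := exists_uniformContinuous_one_le_dist_mul_left hh
  have := isCompact_iff_compactSpace.1 <|
    isCompact_rightOrbitClosure (isCompact_univ_pi fun _ => isCompact_Icc) fun x j _ => hFI x j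
  have := continuousSMul_rightOrbitClosure hFu
  obtain ⟨φ, hφ⟩ := hG (rightOrbitClosure F)
  have hsep := apply_mem_of_mem_rightOrbitClosure (isClosed_le continuous_const continuous_dist)
    hFh φ.2 1
  have hfix : φ.1 (1 * h) = φ.1 1 := congrFun (congrArg Subtype.val (hφ h hhH)) 1
  rw [one_mul] at hfix
  norm_num [hfix] at hsep

/-- A non-compact locally compact Hausdorff topological group `G` is not relatively
extremely amenable over any nontrivial subgroup `H`. -/
theorem not_relativelyExtremelyAmenable_of_locallyCompact_noncompact
    (G : Type) [Group G] [TopologicalSpace G] [IsTopologicalGroup G] [T2Space G]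
    [LocallyCompactSpace G] (hnc : ¬ CompactSpace G)
    (H : Subgroup G) (hH : H ≠ ⊥) :
    ¬ RelativelyExtremelyAmenable G H :=
  not_relativelyExtremelyAmenable_of_locallyCompact_noncompact_general G H hH
end

section
/- Let r be a strict linear order on ℤ (an irreflexive, transitive, trichotomous binary relation) that is invariant under all translations, i.e., for all a, x, y ∈ ℤ, r(x,y) implies r(x+a, y+a). Then r is equal to the usual strict order < on ℤ or to its reverse > (where x > y means y < x). -/
/-- A strict linear order on `ℤ` that is invariant under all translations is the usual
strict order `<` or its reverse `>`. -/
theorem translation_invariant_linear_order_int (r : ℤ → ℤ → Prop)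
    (hirr : ∀ x : ℤ, ¬ r x x)
    (htrans : ∀ x y z : ℤ, r x y → r y z → r x z)
    (htri : ∀ x y : ℤ, r x y ∨ x = y ∨ r y x)
    (hinv : ∀ a x y : ℤ, r x y → r (x + a) (y + a)) :
    (∀ x y : ℤ, r x y ↔ x < y) ∨ (∀ x y : ℤ, r x y ↔ y < x) := by
  have up : r 0 1 → ∀ x y : ℤ, x < y → r x y := by
    intro h01 x y hxy
    have step : ∀ k : ℤ, r k (k + 1) := by
      intro k
      have := hinv k 0 1 h01
      simpa [add_comm] using this
    have chain : ∀ n : ℤ, 1 ≤ n → r 0 n := fun n hn =>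
      Int.le_induction (by simpa using step 0)
        (fun n _ ih => htrans 0 n (n + 1) ih (step n)) n hn
    have := hinv x 0 (y - x) (chain (y - x) (by omega))
    simpa using this
  have down : r 1 0 → ∀ x y : ℤ, y < x → r x y := by
    intro h10 x y hyx
    have step : ∀ k : ℤ, r (k + 1) k := by
      intro k
      have := hinv k 1 0 h10
      simpa [add_comm] using this
    have chain : ∀ n : ℤ, 1 ≤ n → r n 0 := fun n hn =>
      Int.le_induction (by simpa using step 0)
        (fun n _ ih => htrans (n + 1) n 0 (step n) ih) n hn
    have := hinv y (x - y) 0 (chain (x - y) (by omega))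
    simpa using this
  rcases htri 0 1 with h | h | h
  · left
    intro x y
    constructor
    · intro hxy
      rcases lt_trichotomy x y with h' | h' | h'
      · exact h'
      · exact absurd (h' ▸ hxy) (hirr y)
      · exact absurd (htrans x y x hxy (up h y x h')) (hirr x)
    · exact up h x y
  · exact absurd h (by norm_num)
  · right
    intro x y
    constructor
    · intro hxy
      rcases lt_trichotomy y x with h' | h' | h'
      · exact h'
      · exact absurd (h' ▸ hxy) (hirr x)
      · exact absurd (htrans x y x hxy (down h y x h')) (hirr x)
    · exact down h x y
end

section
/- Let r be a strict linear order on ℚ (an irreflexive, transitive, trichotomous binary relation) that is invariant under every order-automorphism of (ℚ,<), i.e., for every bijection g : ℚ → ℚ that is strictly increasing for the usual order, r(x,y) implies r(g(x), g(y)) for all x, y ∈ ℚ. Then r is equal to the usual strict order < on ℚ or to its reverse >. -/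
/-! Affine maps `t ↦ x + (y - x) t` are order automorphisms of `ℚ` carrying `0, 1` to any `x < y`,
so an invariant `r` contains `<` or `>` according to how it compares `0` and `1`; an irreflexive
transitive relation containing a linear order coincides with it. -/

theorem rel_iff_lt_of_lt_imp {α : Type*} [LinearOrder α] {r : α → α → Prop}
    (hirr : ∀ x, ¬ r x x) (htrans : ∀ x y z, r x y → r y z → r x z)
    (hlt : ∀ x y, x < y → r x y) (x y : α) : r x y ↔ x < y := by
  refine ⟨fun hr => ?_, hlt x y⟩
  rcases lt_trichotomy x y with h | rfl | h
  · exact h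
  · exact absurd hr (hirr x)
  · exact absurd (htrans x y x hr (hlt y x h)) (hirr x)

theorem exists_orderIso_map_zero_map_one {K : Type*} [Field K] [LinearOrder K]
    [IsStrictOrderedRing K] {x y : K} (h : x < y) :
    ∃ g : K ≃o K, g 0 = x ∧ g 1 = y :=
  ⟨(OrderIso.mulLeft₀ (y - x) (sub_pos.mpr h)).trans (OrderIso.addLeft x), by simp, by simp⟩

theorem lt_imp_of_orderIso_invariant {K : Type*} [Field K] [LinearOrder K]
    [IsStrictOrderedRing K] {r : K → K → Prop}
    (hinv : ∀ g : K ≃o K, ∀ x y, r x y → r (g x) (g y)) (h01 : r 0 1)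
    (x y : K) (h : x < y) : r x y := by
  obtain ⟨g, hg0, hg1⟩ := exists_orderIso_map_zero_map_one h
  simpa only [hg0, hg1] using hinv g 0 1 h01

/-- A strict linear order on `ℚ` invariant under every order-automorphism of `(ℚ, <)`
is the usual strict order `<` or its reverse `>`. -/
theorem autQ_invariant_linear_order_rat (r : ℚ → ℚ → Prop)
    (hirr : ∀ x : ℚ, ¬ r x x)
    (htrans : ∀ x y z : ℚ, r x y → r y z → r x z)
    (htri : ∀ x y : ℚ, r x y ∨ x = y ∨ r y x)
    (hinv : ∀ g : ℚ → ℚ, Function.Bijective g → StrictMono g →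
      ∀ x y : ℚ, r x y → r (g x) (g y)) :
    (∀ x y : ℚ, r x y ↔ x < y) ∨ (∀ x y : ℚ, r x y ↔ y < x) := by
  have hinv' (g : ℚ ≃o ℚ) (x y : ℚ) : r x y → r (g x) (g y) :=
    hinv g g.bijective g.strictMono x y
  rcases htri 0 1 with h01 | h01 | h10
  · exact .inl <| rel_iff_lt_of_lt_imp hirr htrans (lt_imp_of_orderIso_invariant hinv' h01)
  · exact absurd h01 zero_ne_one
  · have hgt := rel_iff_lt_of_lt_imp (r := fun x y => r y x) hirr
      (fun x y z hxy hyz => htrans z y x hyz hxy)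
      (lt_imp_of_orderIso_invariant (r := fun x y => r y x) (fun g x y => hinv' g y x) h10)
    exact .inr fun x y => hgt y x
end

section
/- Let G be a topological group and let C be a nonempty family of subgroups of G that is totally ordered by inclusion, such that for every K ∈ C the pair (G,K) is relatively extremely amenable. Then the pair (G, ⋃C) is relatively extremely amenable, where ⋃C denotes the union of the subgroups in C (which is a subgroup of G). -/
lemma CompactSpace.nonempty_iInter_of_directed_nonempty_isClosed {X ι : Type*}
    [TopologicalSpace X] [CompactSpace X] [Nonempty X] (t : ι → Set X)
    (htd : Directed (· ⊇ ·) t) (htn : ∀ i, (t i).Nonempty) (htcl : ∀ i, IsClosed (t i)) :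
    (⋂ i, t i).Nonempty := by
  rcases isEmpty_or_nonempty ι with hι | hι
  · simp
  · exact IsCompact.nonempty_iInter_of_directed_nonempty_isCompact_isClosed t htd htn
      (fun i => (htcl i).isCompact) htcl

namespace Subgroup

variable {G : Type*} [Group G] (X : Type*) [MulAction G X]

def fixedPoints (H : Subgroup G) : Set X := {x | ∀ h ∈ H, h • x = x}

lemma fixedPoints_antitone : Antitone (fixedPoints (G := G) X) :=
  fun _ _ hKL _ hx h hh => hx h (hKL hh)

lemma isClosed_fixedPoints [TopologicalSpace X] [T2Space X] [ContinuousConstSMul G X]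
    (H : Subgroup G) : IsClosed (H.fixedPoints X) := by
  simp only [fixedPoints, Set.ofPred_forall]
  exact isClosed_biInter fun h _ => isClosed_eq (continuous_const_smul h) continuous_id

end Subgroup

theorem RelativelyExtremelyAmenable.of_directedOn {G : Type} [Group G] [TopologicalSpace G]
    {C : Set (Subgroup G)} (hC : DirectedOn (· ≤ ·) C)
    (hrea : ∀ K ∈ C, RelativelyExtremelyAmenable G K)
    {U : Subgroup G} (hU : (U : Set G) ⊆ ⋃ K ∈ C, (K : Set G)) :
    RelativelyExtremelyAmenable G U := by
  intro X _ _ _ _ _ _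
  obtain ⟨x, hx⟩ := CompactSpace.nonempty_iInter_of_directed_nonempty_isClosed
    (fun K : C => (K : Subgroup G).fixedPoints X)
    (hC.directed_val.mono_comp (g := Subgroup.fixedPoints X) _ (Subgroup.fixedPoints_antitone X))
    (fun K => hrea K K.2 X) (fun K => Subgroup.isClosed_fixedPoints X (K : Subgroup G))
  refine ⟨x, fun h hh => ?_⟩
  obtain ⟨K, hK, hhK⟩ := Set.mem_iUnion₂.1 (hU hh)
  exact Set.mem_iInter.1 hx ⟨K, hK⟩ h hhK

theorem relativelyExtremelyAmenable_sUnion_chain_general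
    (G : Type) [Group G] [TopologicalSpace G]
    (C : Set (Subgroup G)) (hchain : IsChain (· ≤ ·) C)
    (hrea : ∀ K ∈ C, RelativelyExtremelyAmenable G K)
    (U : Subgroup G) (hU : (U : Set G) = ⋃ K ∈ C, (K : Set G)) :
    RelativelyExtremelyAmenable G U :=
  RelativelyExtremelyAmenable.of_directedOn hchain.directedOn hrea hU.subset

/-- If `C` is a nonempty chain of subgroups of `G` such that `(G, K)` is relatively
extremely amenable for every `K ∈ C`, then `(G, ⋃ C)` is relatively extremely amenable,
where `⋃ C` is the subgroup of `G` whose underlying set is the union of the members of `C`. -/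
theorem relativelyExtremelyAmenable_sUnion_chain
    (G : Type) [Group G] [TopologicalSpace G] [IsTopologicalGroup G]
    (C : Set (Subgroup G)) (hne : C.Nonempty) (hchain : IsChain (· ≤ ·) C)
    (hrea : ∀ K ∈ C, RelativelyExtremelyAmenable G K)
    (U : Subgroup G) (hU : (U : Set G) = ⋃ K ∈ C, (K : Set G)) :
    RelativelyExtremelyAmenable G U :=
  relativelyExtremelyAmenable_sUnion_chain_general G C hchain hrea U hU
end

section
/- Let G be a topological group. Then there exists a subgroup H ⊆ G such that the pair (G,H) is relatively extremely amenable, and H is maximal with this property: for every subgroup H' of G with H ⊆ H' and (G,H') relatively extremely amenable, one has H' = H. -/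
/-!
Zorn's lemma. For a directed family of subgroups `H` with `(G, H)` relatively extremely
amenable, the sets of `H`-fixed points in a compact Hausdorff `G`-space are nonempty, closed
and directed downwards, so they have a common point by compactness; that point is fixed by
the supremum of the family.
-/

theorem isClosed_setOf_forall_mem_smul_eq {G X : Type} [Group G] [TopologicalSpace X] [T2Space X]
    [MulAction G X] [ContinuousConstSMul G X] (H : Subgroup G) :
    IsClosed {x : X | ∀ h ∈ H, h • x = x} := by
  simp only [Set.ofPred_forall]
  exact isClosed_biInter fun h _ => isClosed_eq (continuous_const_smul h) continuous_id

section

variable {G : Type} [Group G] [TopologicalSpace G]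

theorem RelativelyExtremelyAmenable.bot : RelativelyExtremelyAmenable G ⊥ := by
  intro X _ _ _ _ _ _
  exact ⟨Classical.arbitrary X, fun h hh => by rw [Subgroup.mem_bot.1 hh, one_smul]⟩

theorem RelativelyExtremelyAmenable.sSup_of_directedOn {c : Set (Subgroup G)}
    (hne : c.Nonempty) (hc : DirectedOn (· ≤ ·) c)
    (hrea : ∀ H ∈ c, RelativelyExtremelyAmenable G H) :
    RelativelyExtremelyAmenable G (sSup c) := by
  intro X _ _ _ _ _ _
  have : Nonempty c := hne.to_subtype
  let F : c → Set X := fun H => {x | ∀ h ∈ (H : Subgroup G), h • x = x}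
  have hF_closed (H : c) : IsClosed (F H) := isClosed_setOf_forall_mem_smul_eq (H : Subgroup G)
  have hF_directed : Directed (· ⊇ ·) F := by
    rintro ⟨H₁, hH₁⟩ ⟨H₂, hH₂⟩
    obtain ⟨K, hK, hH₁K, hH₂K⟩ := hc H₁ hH₁ H₂ hH₂
    exact ⟨⟨K, hK⟩, fun x hx h hh => hx h (hH₁K hh), fun x hx h hh => hx h (hH₂K hh)⟩
  obtain ⟨x, hx⟩ := IsCompact.nonempty_iInter_of_directed_nonempty_isCompact_isClosed F
    hF_directed (fun H => hrea H H.2 X) (fun H => (hF_closed H).isCompact) hF_closed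
  refine ⟨x, fun h hh => ?_⟩
  obtain ⟨H, hH, hhH⟩ := (Subgroup.mem_sSup_of_directedOn hne hc).1 hh
  exact Set.mem_iInter.1 hx ⟨H, hH⟩ h hhH

end

theorem exists_maximally_relativelyExtremelyAmenable_general
    (G : Type) [Group G] [TopologicalSpace G] :
    ∃ H : Subgroup G, RelativelyExtremelyAmenable G H ∧
      ∀ H' : Subgroup G, H ≤ H' → RelativelyExtremelyAmenable G H' → H' = H := by
  obtain ⟨H, -, hH⟩ := zorn_le_nonempty₀ {H : Subgroup G | RelativelyExtremelyAmenable G H}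
    (fun c hc hchain K hK => ⟨sSup c,
      RelativelyExtremelyAmenable.sSup_of_directedOn ⟨K, hK⟩ hchain.directedOn hc,
      fun _ => le_sSup⟩)
    ⊥ RelativelyExtremelyAmenable.bot
  exact ⟨H, hH.1, fun H' hHH' hH' => le_antisymm (hH.2 hH' hHH') hHH'⟩

/-- Every topological group `G` admits a subgroup `H` such that `(G, H)` is relatively
extremely amenable and `H` is maximal with this property. -/
theorem exists_maximally_relativelyExtremelyAmenable
    (G : Type) [Group G] [TopologicalSpace G] [IsTopologicalGroup G] :
    ∃ H : Subgroup G, RelativelyExtremelyAmenable G H ∧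
      ∀ H' : Subgroup G, H ≤ H' → RelativelyExtremelyAmenable G H' → H' = H :=
  exists_maximally_relativelyExtremelyAmenable_general G
end

section
/- Let G be a topological group and let C be a nonempty family of subgroups of G that is totally ordered by inclusion, such that every K ∈ C, equipped with the subspace topology, is extremely amenable. Then the union ⋃C (which is a subgroup of G), equipped with the subspace topology, is extremely amenable. -/
/-! Each `K ∈ C` fixes a point of `X` through the continuous inclusion `K → ⋃ C`. The sets of
points fixed by the members of the chain are closed, nonempty and directed downward, so by
compactness of `X` they meet, and a common point is fixed by all of `⋃ C`. -/

theorem ExtremelyAmenable.exists_forall_map_smul_eq {H G : Type} [Group H] [TopologicalSpace H]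
    [Group G] [TopologicalSpace G] (hH : ExtremelyAmenable H) {φ : H →* G} (hφ : Continuous φ)
    (X : Type) [TopologicalSpace X] [CompactSpace X] [T2Space X] [Nonempty X]
    [MulAction G X] [ContinuousSMul G X] : ∃ x : X, ∀ h : H, φ h • x = x :=
  letI : MulAction H X := MulAction.compHom X φ
  haveI : ContinuousSMul H X := MulAction.continuousSMul_compHom hφ
  hH X

section CommonFixedPoints

variable {M X : Type*} [Monoid M] [MulAction M X] [TopologicalSpace X] [T2Space X]
  [ContinuousConstSMul M X]

theorem isClosed_setOf_forall_smul_eq (S : Set M) : IsClosed {x : X | ∀ g ∈ S, g • x = x} := by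
  simp only [Set.ofPred_forall]
  exact isClosed_biInter fun g _ => isClosed_eq (continuous_const_smul g) continuous_id

theorem exists_forall_mem_iUnion_smul_eq_of_directed [CompactSpace X] [Nonempty X] {ι : Type*}
    {S : ι → Set M} (hS : Directed (· ≤ ·) S) (hfix : ∀ i, ∃ x : X, ∀ g ∈ S i, g • x = x) :
    ∃ x : X, ∀ g ∈ ⋃ i, S i, g • x = x := by
  rcases isEmpty_or_nonempty ι with _ | _
  · exact ⟨Classical.arbitrary X, by simp⟩
  let F : ι → Set X := fun i => {x | ∀ g ∈ S i, g • x = x}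
  have hF_directed : Directed (· ⊇ ·) F := fun i j =>
    let ⟨k, hik, hjk⟩ := hS i j
    ⟨k, fun _ hx g hg => hx g (hik hg), fun _ hx g hg => hx g (hjk hg)⟩
  have hF_closed : ∀ i, IsClosed (F i) := fun i => isClosed_setOf_forall_smul_eq (S i)
  obtain ⟨x, hx⟩ := IsCompact.nonempty_iInter_of_directed_nonempty_isCompact_isClosed F
    hF_directed hfix (fun i => (hF_closed i).isCompact) hF_closed
  refine ⟨x, fun g hg => ?_⟩
  obtain ⟨i, hgi⟩ := Set.mem_iUnion.mp hg
  exact Set.mem_iInter.mp hx i g hgi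

end CommonFixedPoints

theorem extremelyAmenable_sUnion_chain_general
    (G : Type) [Group G] [TopologicalSpace G]
    (C : Set (Subgroup G)) (hchain : IsChain (· ≤ ·) C)
    (hea : ∀ K ∈ C, ExtremelyAmenable ↥K)
    (U : Subgroup G) (hU : (U : Set G) = ⋃ K ∈ C, (K : Set G)) :
    ExtremelyAmenable ↥U := by
  intro X _ _ _ _ _ _
  have hle : ∀ K ∈ C, K ≤ U := fun K hK g hg =>
    (hU ▸ Set.mem_biUnion hK hg : g ∈ (U : Set G))
  let S : C → Set U := fun K => Set.range (Subgroup.inclusion (hle K.1 K.2))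
  have hS_mono : ∀ K L : C, K.1 ≤ L.1 → S K ≤ S L := by
    rintro K L hKL _ ⟨k, rfl⟩
    exact ⟨Subgroup.inclusion hKL k, rfl⟩
  have hS_directed : Directed (· ≤ ·) S := fun K L =>
    (hchain.total K.2 L.2).elim (fun h => ⟨L, hS_mono K L h, le_rfl⟩)
      fun h => ⟨K, le_rfl, hS_mono L K h⟩
  have hS_fix : ∀ K, ∃ x : X, ∀ g ∈ S K, g • x = x := fun K =>
    ((hea K.1 K.2).exists_forall_map_smul_eq (continuous_inclusion (hle K.1 K.2)) X).imp
      fun _ hx => Set.forall_mem_range.mpr hx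
  have hS_cover : ∀ u : U, u ∈ ⋃ K, S K := by
    rintro ⟨g, hg⟩
    obtain ⟨K, hK, hgK⟩ := Set.mem_iUnion₂.mp (hU ▸ hg : g ∈ ⋃ K ∈ C, (K : Set G))
    exact Set.mem_iUnion.mpr ⟨⟨K, hK⟩, ⟨g, hgK⟩, rfl⟩
  obtain ⟨x, hx⟩ := exists_forall_mem_iUnion_smul_eq_of_directed hS_directed hS_fix
  exact ⟨x, fun u => hx u (hS_cover u)⟩

/-- The union of a nonempty chain of extremely amenable subgroups of `G` (each with the
subspace topology) is extremely amenable in the subspace topology. -/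
theorem extremelyAmenable_sUnion_chain
    (G : Type) [Group G] [TopologicalSpace G] [IsTopologicalGroup G]
    (C : Set (Subgroup G)) (hne : C.Nonempty) (hchain : IsChain (· ≤ ·) C)
    (hea : ∀ K ∈ C, ExtremelyAmenable ↥K)
    (U : Subgroup G) (hU : (U : Set G) = ⋃ K ∈ C, (K : Set G)) :
    ExtremelyAmenable ↥U :=
  extremelyAmenable_sUnion_chain_general G C hchain hea U hU
end

section
/- Let G = S∞ be the group of all permutations of ℤ, equipped with the topology of pointwise convergence, and let H = {σ ∈ G | σ is strictly increasing for the usual order on ℤ} (equivalently, H is the group of translations of ℤ). Then the pair (G,H) is relatively extremely amenable: every continuous action of G on a nonempty compact Hausdorff space has a point fixed by every element of H. -/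
/-- The topology of pointwise convergence on the permutation group of a set `α`
(`α` being given the discrete topology): the topology induced by the embedding
`σ ↦ (σ, σ⁻¹)` into `(α → α) × (α → α)`. -/
def permPointwiseTopology (α : Type) : TopologicalSpace (Equiv.Perm α) :=
  letI : TopologicalSpace α := ⊥
  TopologicalSpace.induced
    (fun σ : Equiv.Perm α => ((⇑σ, ⇑σ.symm) : (α → α) × (α → α))) inferInstance

/-- The subgroup of the permutation group of a linear order `α` consisting of the
permutations that are strictly increasing. -/
def strictMonoPerms (α : Type) [LinearOrder α] : Subgroup (Equiv.Perm α) where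
  carrier := {σ : Equiv.Perm α | StrictMono ⇑σ}
  one_mem' := fun _ _ h => h
  mul_mem' := fun ha hb _ _ h => ha (hb h)
  inv_mem' := by
    intro a ha x y hxy
    have h := ha.lt_iff_lt (a := a⁻¹ x) (b := a⁻¹ y)
    rw [← Equiv.Perm.mul_apply, ← Equiv.Perm.mul_apply, mul_inv_cancel, Equiv.Perm.one_apply,
      Equiv.Perm.one_apply] at h
    exact h.mp hxy

noncomputable instance : TopologicalSpace (Equiv.Perm ℤ) := permPointwiseTopology ℤ

open Topology Uniformity

universe u

theorem Int.addRight_one_zpow (k : ℤ) : Equiv.addRight (1 : ℤ) ^ k = Equiv.addRight k := by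
  induction k using Int.induction_on with
  | zero => ext; simp
  | succ k ih => rw [zpow_add_one, ih]; ext; simp; ring
  | pred k ih => rw [zpow_sub_one, ih]; ext; simp [Equiv.Perm.inv_def]; ring

theorem Int.perm_eq_addRight_of_strictMono {σ : Equiv.Perm ℤ} (hσ : StrictMono σ) :
    σ = Equiv.addRight (σ 0) := by
  have map_add_one : ∀ n, σ (n + 1) = σ n + 1 := fun n => by
    simpa [Order.succ_eq_add_one] using (hσ.orderIsoOfSurjective σ σ.surjective).map_succ n
  ext n
  induction n using Int.induction_on with
  | zero => simp
  | succ k ih => simp only [Equiv.coe_addRight] at ih ⊢; rw [map_add_one, ih]; ring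
  | pred k ih =>
    simp only [Equiv.coe_addRight] at ih ⊢
    have := map_add_one (-(k : ℤ) - 1)
    rw [sub_add_cancel, ih] at this
    linarith

theorem strictMonoPerms_int_le_zpowers :
    strictMonoPerms ℤ ≤ Subgroup.zpowers (Equiv.addRight 1) := fun σ hσ =>
  ⟨σ 0, by simp only [Int.addRight_one_zpow, ← Int.perm_eq_addRight_of_strictMono hσ]⟩

theorem Fin.init_cons {α : Type*} {n : ℕ} (a : α) (f : Fin (n + 1) → α) :
    Fin.init (Fin.cons a f : Fin (n + 2) → α) = Fin.cons a (Fin.init f) := by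
  ext i
  cases i using Fin.cases <;> simp [Fin.init]

theorem exists_strictMono_apply_init_eq_apply_tail {α κ : Type*} [LinearOrder α] [Infinite α]
    [Finite κ] (k : ℕ) (c : (Fin (k + 1) → α) → κ) :
    ∃ ψ : Fin (k + 2) → α, StrictMono ψ ∧ c (Fin.init ψ) = c (Fin.tail ψ) := by
  induction k generalizing κ with
  | zero =>
    obtain ⟨a, b, hne, hab⟩ := Finite.exists_ne_map_eq_of_infinite fun a : α => c ![a]
    have init_pair : ∀ x y : α, Fin.init ![x, y] = ![x] := fun x y => by ext i; fin_cases i; rfl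
    rcases hne.lt_or_gt with h | h
    · exact ⟨![a, b], by simpa using h, by rwa [init_pair]⟩
    · exact ⟨![b, a], by simpa using h, by rw [init_pair]; exact hab.symm⟩
  | succ k ih =>
    -- Recolour a tuple by the set of colours of its extensions to the left.
    let d : (Fin (k + 1) → α) → Set κ := fun φ => {i | ∃ b < φ 0, c (Fin.cons b φ) = i}
    obtain ⟨σ, hσ, hd⟩ := ih d
    have hσ_mem : c σ ∈ d (Fin.tail σ) := ⟨σ 0, hσ (Fin.succ_pos 0), by rw [Fin.cons_self_tail]⟩
    obtain ⟨b, hb, hbσ⟩ : c σ ∈ d (Fin.init σ) := hd ▸ hσ_mem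
    refine ⟨Fin.cons b σ, StrictMono.vecCons hσ hb, ?_⟩
    rw [Fin.init_cons, Fin.tail_cons, hbσ]

theorem exists_finset_of_mem_nhds_pi_discrete {ι β : Type*} [TopologicalSpace β]
    [DiscreteTopology β] {f : ι → β} {s : Set (ι → β)} (hs : s ∈ 𝓝 f) :
    ∃ F : Finset ι, ∀ g : ι → β, (∀ i ∈ F, g i = f i) → g ∈ s := by
  rw [nhds_pi, Filter.mem_pi'] at hs
  obtain ⟨F, t, ht, hts⟩ := hs
  refine ⟨F, fun g hg => hts fun i hi => ?_⟩
  rw [hg i hi]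
  exact mem_of_mem_nhds (ht i)

theorem exists_finset_fixing_mem_of_mem_nhds_one {α : Type} {v : Set (Equiv.Perm α)}
    (hv : v ∈ @nhds _ (permPointwiseTopology α) 1) :
    ∃ F : Finset α, ∀ g : Equiv.Perm α, (∀ a ∈ F, g a = a) → g ∈ v := by
  let _ : TopologicalSpace α := ⊥
  have : DiscreteTopology α := ⟨rfl⟩
  rw [permPointwiseTopology, nhds_induced, Filter.mem_comap] at hv
  obtain ⟨S, hS, hSv⟩ := hv
  rw [nhds_prod_eq, Filter.mem_prod_iff] at hS
  obtain ⟨S₁, hS₁, S₂, hS₂, hS⟩ := hS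
  obtain ⟨F₁, hF₁⟩ := exists_finset_of_mem_nhds_pi_discrete hS₁
  obtain ⟨F₂, hF₂⟩ := exists_finset_of_mem_nhds_pi_discrete hS₂
  classical
  refine ⟨F₁ ∪ F₂, fun g hg => hSv (hS ⟨hF₁ g fun a ha => ?_, hF₂ g.symm fun a ha => ?_⟩)⟩
  · exact hg a (Finset.mem_union_left _ ha)
  · exact g.symm_apply_eq.2 (hg a (Finset.mem_union_right _ ha)).symm

theorem eventually_nhds_one_forall_smul_mem_uniformity {G X : Type*} [TopologicalSpace G]
    [Monoid G] [UniformSpace X] [CompactSpace X] [MulAction G X] [ContinuousSMul G X]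
    {V : SetRel X X} (hV : V ∈ 𝓤 X) : ∀ᶠ g in 𝓝 (1 : G), ∀ y : X, (g • y, y) ∈ V := by
  have := isCompact_univ.eventually_forall_of_forall_eventually (x₀ := (1 : G))
    (P := fun g y => (g • y, y) ∈ V) fun y _ => ?_
  · simpa using this
  have hcont : Continuous fun p : G × X => (p.1 • p.2, p.2) := continuous_smul.prodMk continuous_snd
  have := hcont.tendsto ((1 : G), y)
  simp only [one_smul] at this
  exact this (nhds_le_uniformity y hV)

theorem exists_finite_coloring_of_mem_uniformity {X : Type u} [UniformSpace X] [CompactSpace X]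
    {W : SetRel X X} (hW : W ∈ 𝓤 X) :
    ∃ (κ : Type u) (_ : Finite κ) (f : X → κ), ∀ x y, f x = f y → (x, y) ∈ W := by
  obtain ⟨W', hW', hW'symm, hW'W⟩ := comp_symm_mem_uniformity_sets hW
  obtain ⟨t, ht, hcover⟩ := isCompact_univ.totallyBounded W' hW'
  have hcenter : ∀ x, ∃ y : t, (x, (y : X)) ∈ W' := fun x => by
    simpa using hcover (Set.mem_univ x)
  choose f hf using hcenter
  refine ⟨t, ht.to_subtype, f, fun x y hxy => hW'W ⟨f x, hf x, ?_⟩⟩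
  rw [hxy]
  exact SetRel.symm W' (hf y)

theorem exists_fixedPoint_of_forall_mem_uniformity {X : Type*} [UniformSpace X] [CompactSpace X]
    [T2Space X] {f : X → X} (hf : Continuous f) (h : ∀ V ∈ 𝓤 X, ∃ x, (x, f x) ∈ V) :
    ∃ x, f x = x := by
  by_contra! hno
  have hgraph : IsClosed (Set.range fun x => (x, f x)) :=
    (isCompact_range (continuous_id.prodMk hf)).isClosed
  have hdiag : Set.diagonal X ⊆ (Set.range fun x => (x, f x))ᶜ := by
    rintro ⟨x, y⟩ (rfl : x = y) ⟨z, hz⟩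
    simp only [Prod.mk.injEq] at hz
    exact hno x (hz.1 ▸ hz.2)
  have hmem : (Set.range fun x => (x, f x))ᶜ ∈ 𝓤 X := by
    rw [← nhdsSet_diagonal_eq_uniformity]
    exact hgraph.isOpen_compl.mem_nhdsSet.2 hdiag
  obtain ⟨x, hx⟩ := h _ hmem
  exact hx ⟨x, rfl⟩

theorem Finset.exists_forall_mem_eq_add_fin (F : Finset ℤ) :
    ∃ (a : ℤ) (k : ℕ), ∀ x ∈ F, ∃ i : Fin (k + 1), a + i = x := by
  obtain ⟨M, hM⟩ : ∃ M : ℕ, ∀ x ∈ F, x.natAbs ≤ M := ⟨F.sup Int.natAbs, fun x => F.le_sup⟩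
  refine ⟨-M, 2 * M, fun x hx => ⟨⟨(x + M).toNat, by have := hM x hx; omega⟩, ?_⟩⟩
  have := hM x hx
  simp only
  omega

theorem smul_mem_of_forall_apply_eq {α X : Type*} {ι : Sort*} [MulAction (Equiv.Perm α) X]
    {W : SetRel X X} {F : Finset α}
    (hF : ∀ g : Equiv.Perm α, (∀ a ∈ F, g a = a) → ∀ y, (g • y, y) ∈ W)
    {e φ : ι → α} (hFe : ∀ x ∈ F, ∃ i, e i = x) {g g' : Equiv.Perm α}
    (hg : ∀ i, g (φ i) = e i) (hg' : ∀ i, g' (φ i) = e i) (y : X) : (g' • y, g • y) ∈ W := by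
  have hfix : ∀ x ∈ F, (g' * g⁻¹) x = x := by
    intro x hx
    obtain ⟨i, rfl⟩ := hFe x hx
    rw [Equiv.Perm.mul_apply, Equiv.Perm.inv_eq_iff_eq.2 (hg i).symm, hg' i]
  simpa [smul_smul] using hF _ hfix (g • y)

theorem exists_addRight_one_smul_mem_uniformity {X : Type u} [UniformSpace X] [CompactSpace X]
    [Nonempty X] [MulAction (Equiv.Perm ℤ) X] [ContinuousSMul (Equiv.Perm ℤ) X]
    {V : SetRel X X} (hV : V ∈ 𝓤 X) : ∃ z : X, (z, Equiv.addRight (1 : ℤ) • z) ∈ V := by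
  obtain ⟨W, hW, hWsymm, hWV⟩ := comp_comp_symm_mem_uniformity_sets hV
  obtain ⟨F, hF⟩ := exists_finset_fixing_mem_of_mem_nhds_one
    (eventually_nhds_one_forall_smul_mem_uniformity (G := Equiv.Perm ℤ) hW)
  obtain ⟨a, k, hFe⟩ := F.exists_forall_mem_eq_add_fin
  obtain ⟨κ, _, col, hcol⟩ := exists_finite_coloring_of_mem_uniformity hW
  obtain ⟨x₀⟩ := ‹Nonempty X›
  have hwindow : ∀ φ : Fin (k + 1) → ℤ, ∃ g : Equiv.Perm ℤ,
      Function.Injective φ → ∀ i, g (φ i) = a + i := fun φ => by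
    by_cases hφ : Function.Injective φ
    · obtain ⟨g, hg⟩ := Equiv.Perm.exists_extending_pair φ (fun i : Fin (k + 1) => a + i) hφ
        fun i j h => Fin.ext (by simpa using h)
      exact ⟨g, fun _ => hg⟩
    · exact ⟨1, fun h => absurd h hφ⟩
  choose g hg using hwindow
  obtain ⟨ψ, hψ, hcolψ⟩ := exists_strictMono_apply_init_eq_apply_tail k fun φ => col (g φ • x₀)
  obtain ⟨g₀, hg₀⟩ := Equiv.Perm.exists_extending_pair ψ (fun i : Fin (k + 2) => a + i)
    hψ.injective fun i j h => Fin.ext (by simpa using h)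
  have h_init : ∀ i, g₀ (Fin.init ψ i) = a + i := fun i => by simp [Fin.init, hg₀]
  have h_tail : ∀ i, ((Equiv.addRight (1 : ℤ))⁻¹ * g₀) (Fin.tail ψ i) = a + i := fun i => by
    simp [Fin.tail, hg₀, Equiv.Perm.inv_def]
    ring
  refine ⟨((Equiv.addRight (1 : ℤ))⁻¹ * g₀) • x₀, ?_⟩
  rw [smul_smul, mul_inv_cancel_left]
  refine hWV ⟨g (Fin.init ψ) • x₀, ⟨g (Fin.tail ψ) • x₀, ?_, ?_⟩, ?_⟩
  · exact smul_mem_of_forall_apply_eq hF hFe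
      (hg _ (hψ.comp Fin.strictMono_succ).injective) h_tail x₀
  · exact SetRel.symm W (hcol _ _ hcolψ)
  · exact smul_mem_of_forall_apply_eq hF hFe h_init
      (hg _ (hψ.comp Fin.strictMono_castSucc).injective) x₀

/-- For `S∞` the permutation group of `ℤ` with the topology of pointwise convergence and
`H` the subgroup of strictly increasing permutations (the translations), the pair
`(S∞, H)` is relatively extremely amenable. -/
theorem relativelyExtremelyAmenable_permInt_strictMono :
    RelativelyExtremelyAmenable (Equiv.Perm ℤ) (strictMonoPerms ℤ) := by
  intro X _ _ _ _ _ _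
  let _ : UniformSpace X := uniformSpaceOfCompactR1
  have approx : ∀ V ∈ 𝓤 X, ∃ z : X, (z, Equiv.addRight (1 : ℤ) • z) ∈ V :=
    fun _ => exists_addRight_one_smul_mem_uniformity
  obtain ⟨z, hz⟩ := exists_fixedPoint_of_forall_mem_uniformity (continuous_const_smul _) approx
  have hstab : Subgroup.zpowers (Equiv.addRight 1) ≤ MulAction.stabilizer (Equiv.Perm ℤ) z :=
    Subgroup.zpowers_le.2 hz
  exact ⟨z, fun h hh => hstab (strictMonoPerms_int_le_zpowers hh)⟩
end

section
/- Let G₀ be a topological group, let T be a universal compact Hausdorff G₀-space, let x ∈ T, and let G = Stab(x) = {g ∈ G₀ | g·x = x} be the stabilizer subgroup of x. Then T is minimal if and only if Fix(G) = {y ∈ T | ∀ g ∈ G, g·y = y} is transitive with respect to T, i.e., for every y ∈ Fix(G) the orbit closure of y under G₀ equals T. -/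
/-! In a minimal system every orbit is dense. Conversely, by Zorn's lemma and compactness a
nonempty closed invariant set `S ⊆ T` contains a minimal subsystem `M`. Universality gives an
equivariant surjection `f : T → M`; the point `f x` is fixed by `Stab(x)`, so its orbit is dense
in `T`, but it stays inside the closed set `M`. Hence `M = T`, and so `S = T`. -/

open MulAction Set Pointwise Topology

section

variable {G X : Type} [Group G] [TopologicalSpace X] [MulAction G X]

theorem isMinimalSpace_iff_nonempty_and_isMinimal [ContinuousConstSMul G X] :
    IsMinimalSpace G X ↔ Nonempty X ∧ IsMinimal G X := by
  simp only [IsMinimalSpace, isMinimal_iff_isClosed_smul_invariant, smul_set_subset_iff]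

variable (G) in
def IsMinimalInvariantSet (M : Set X) : Prop :=
  Minimal (fun N : Set X ↦ N.Nonempty ∧ IsClosed N ∧ ∀ g : G, g • N ⊆ N) M

theorem IsClosed.exists_isMinimalInvariantSet_subset [CompactSpace X] {S : Set X}
    (hS : IsClosed S) (hne : S.Nonempty) (hinv : ∀ g : G, g • S ⊆ S) :
    ∃ M ⊆ S, IsMinimalInvariantSet G M := by
  refine zorn_superset_nonempty _ (fun c hc hchain hcne ↦ ?_) S ⟨hne, hS, hinv⟩
  have : Nonempty c := hcne.to_subtype
  have hdir : DirectedOn (· ⊇ ·) c := fun a ha b hb ↦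
    (hchain.total ha hb).elim (fun h ↦ ⟨a, ha, subset_rfl, h⟩) fun h ↦ ⟨b, hb, h, subset_rfl⟩
  refine ⟨⋂₀ c, ⟨?_, isClosed_sInter fun N hN ↦ (hc hN).2.1, fun g ↦ ?_⟩,
    fun N hN ↦ sInter_subset_of_mem hN⟩
  · exact IsCompact.nonempty_sInter_of_directed_nonempty_isCompact_isClosed hdir
      (fun N hN ↦ (hc hN).1) (fun N hN ↦ (hc hN).2.1.isCompact) fun N hN ↦ (hc hN).2.1
  · exact smul_set_subset_iff.2 fun y hy ↦ mem_sInter.2 fun N hN ↦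
      (hc hN).2.2 g (smul_mem_smul_set (mem_sInter.1 hy N hN))

instance SubMulAction.continuousConstSMul [ContinuousConstSMul G X] (s : SubMulAction G X) :
    ContinuousConstSMul G s :=
  ⟨fun g ↦ ((continuous_const_smul g).comp continuous_subtype_val).subtype_mk _⟩

namespace IsMinimalInvariantSet

variable {M : Set X} (hM : IsMinimalInvariantSet G M)
include hM

theorem nonempty : M.Nonempty := hM.prop.1

theorem isClosed : IsClosed M := hM.prop.2.1

theorem smul_subset (g : G) : g • M ⊆ M := hM.prop.2.2 g

theorem closure_orbit_eq [ContinuousConstSMul G X] {m : X} (hm : m ∈ M) :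
    closure (orbit G m) = M := by
  refine hM.eq_of_subset ⟨(nonempty_orbit m).closure, isClosed_closure,
    fun g ↦ smul_closure_orbit_subset g m⟩ (closure_minimal ?_ hM.isClosed)
  rintro _ ⟨g, rfl⟩
  exact hM.smul_subset g (smul_mem_smul_set hm)

def toSubMulAction : SubMulAction G X where
  carrier := M
  smul_mem' g _ hm := hM.smul_subset g (smul_mem_smul_set hm)

theorem isMinimalSpace [ContinuousConstSMul G X] : IsMinimalSpace G hM.toSubMulAction := by
  rw [isMinimalSpace_iff_nonempty_and_isMinimal]
  refine ⟨hM.nonempty.to_subtype, ⟨fun m ↦ ?_⟩⟩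
  rw [IsInducing.subtypeVal.dense_iff, SubMulAction.val_image_orbit, hM.closure_orbit_eq m.2]
  exact fun y ↦ y.2

end IsMinimalInvariantSet

end

theorem universal_minimal_iff_fixedPoints_transitive_general
    (G₀ : Type) [Group G₀] [TopologicalSpace G₀]
    (T : Type) [TopologicalSpace T] [CompactSpace T] [T2Space T] [MulAction G₀ T]
    [ContinuousSMul G₀ T] (huniv : IsUniversalSpace G₀ T) (x : T) :
    IsMinimalSpace G₀ T ↔
      ∀ y : T, (∀ g : G₀, g • x = x → g • y = y) →
        closure (MulAction.orbit G₀ y) = Set.univ := by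
  constructor
  · rintro hT y -
    have : IsMinimal G₀ T := (isMinimalSpace_iff_nonempty_and_isMinimal.1 hT).2
    exact (dense_orbit G₀ y).closure_eq
  · intro h
    refine ⟨⟨x⟩, fun S hS hinv ↦ S.eq_empty_or_nonempty.imp_right fun hne ↦ ?_⟩
    obtain ⟨M, hMS, hM⟩ :=
      hS.exists_isMinimalInvariantSet_subset hne fun g ↦ smul_set_subset_iff.2 (hinv g)
    have : CompactSpace hM.toSubMulAction := isCompact_iff_compactSpace.1 hM.isClosed.isCompact
    obtain ⟨f, -, -, hf⟩ := huniv _ hM.isMinimalSpace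
    have hfix : ∀ g : G₀, g • x = x → g • (f x : T) = f x := fun g hg ↦
      congrArg Subtype.val ((hf g x).symm.trans (congrArg f hg))
    have hMT : M = univ := (hM.closure_orbit_eq (f x).2).symm.trans (h _ hfix)
    exact univ_subset_iff.1 (hMT ▸ hMS)

/-- Let `T` be a universal compact Hausdorff `G₀`-space, `x ∈ T`, and `G = Stab(x)`.
Then `T` is minimal if and only if `Fix(G)` is transitive with respect to `T`, i.e. the
`G₀`-orbit closure of every point fixed by all of `G` is all of `T`. -/
theorem universal_minimal_iff_fixedPoints_transitive
    (G₀ : Type) [Group G₀] [TopologicalSpace G₀] [IsTopologicalGroup G₀]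
    (T : Type) [TopologicalSpace T] [CompactSpace T] [T2Space T] [MulAction G₀ T]
    [ContinuousSMul G₀ T] (huniv : IsUniversalSpace G₀ T) (x : T) :
    IsMinimalSpace G₀ T ↔
      ∀ y : T, (∀ g : G₀, g • x = x → g • y = y) →
        closure (MulAction.orbit G₀ y) = Set.univ :=
  universal_minimal_iff_fixedPoints_transitive_general G₀ T huniv x
end
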